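/- Let H be smooth, M symplectic with H ∘ M = H, and suppose M Φ_t(z) = z. Then also (ᵗF_z(t) ᵗM - I) ∇H(z) = 0. -/

import Mathlib

noncomputable def toE {d : ℕ} (v : Fin d ⊕ Fin d → ℝ) :
    EuclideanSpace ℝ (Fin d ⊕ Fin d) :=
  (WithLp.equiv 2 (Fin d ⊕ Fin d → ℝ)).symm v

noncomputable def ofE {d : ℕ} (v : EuclideanSpace ℝ (Fin d ⊕ Fin d)) :
    Fin d ⊕ Fin d → ℝ :=
  WithLp.equiv 2 (Fin d ⊕ Fin d → ℝ) v

open scoped RealInnerProductSpace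

lemma aux_inner_gradient {d : ℕ} (f : EuclideanSpace ℝ (Fin d ⊕ Fin d) → ℝ)
    (x v : EuclideanSpace ℝ (Fin d ⊕ Fin d)) :
    ⟪gradient f x, v⟫ = fderiv ℝ f x v := by
  rw [gradient, ← InnerProductSpace.toDual_apply_apply,
    (InnerProductSpace.toDual ℝ _).apply_symm_apply]

lemma aux_inner_dot {d : ℕ} (x y : EuclideanSpace ℝ (Fin d ⊕ Fin d)) :
    ⟪x, y⟫ = dotProduct (ofE x) (ofE y) := by
  simp [ofE, PiLp.inner_apply, dotProduct, RCLike.inner_apply, mul_comm]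

lemma aux_antisym {n : Type*} [Fintype n] (A : Matrix n n ℝ) (hA : A.transpose = -A)
    (a : n → ℝ) : dotProduct a (A.mulVec a) = 0 := by
  have h1 : dotProduct a (A.mulVec a) = dotProduct (A.vecMul a) a :=
    Matrix.dotProduct_mulVec a A a
  have h2 : A.vecMul a = -(A.mulVec a) := by
    rw [← Matrix.mulVec_transpose, hA, Matrix.neg_mulVec]
  have h3 : dotProduct (A.mulVec a) a = dotProduct a (A.mulVec a) :=
    dotProduct_comm _ _
  rw [h2, neg_dotProduct, h3] at h1
  linarith

/-- In the same setting, if `M Φ_t(z) = z` then `(ᵗF_z(t) ᵗM - I) ∇H(z) = 0`, with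
`Φ` the Hamiltonian flow of smooth `H`, `F_z(t) = ∂_z Φ_t(z)` its
linearization, and `M` symplectic with `H ∘ M = H`; the transpose of `F` is
its (real) adjoint. -/
theorem stmt12 {d : ℕ} (H : EuclideanSpace ℝ (Fin d ⊕ Fin d) → ℝ)
    (hH : ContDiff ℝ (⊤ : ℕ∞) H)
    (J : Matrix (Fin d ⊕ Fin d) (Fin d ⊕ Fin d) ℝ)
    (hJ : J = Matrix.fromBlocks 0 1 (-1) 0)
    (M : Matrix (Fin d ⊕ Fin d) (Fin d ⊕ Fin d) ℝ)
    (hsymp : M.transpose * J * M = J)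
    (hinv : ∀ z : EuclideanSpace ℝ (Fin d ⊕ Fin d),
      H (toE (M.mulVec (ofE z))) = H z)
    (Φ : ℝ → EuclideanSpace ℝ (Fin d ⊕ Fin d) →
      EuclideanSpace ℝ (Fin d ⊕ Fin d))
    (hΦ0 : ∀ z, Φ 0 z = z)
    (hΦ : ∀ t z, HasDerivAt (fun s => Φ s z)
      (toE (J.mulVec (ofE (gradient H (Φ t z))))) t)
    (F : ℝ → EuclideanSpace ℝ (Fin d ⊕ Fin d) →
      (EuclideanSpace ℝ (Fin d ⊕ Fin d) →L[ℝ]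
        EuclideanSpace ℝ (Fin d ⊕ Fin d)))
    (hF : ∀ t z, HasFDerivAt (Φ t) (F t z) z)
    (t : ℝ) (z : EuclideanSpace ℝ (Fin d ⊕ Fin d))
    (hfix : toE (M.mulVec (ofE (Φ t z))) = z) :
    ContinuousLinearMap.adjoint (F t z)
        (toE (M.transpose.mulVec (ofE (gradient H z))))
      = gradient H z := by
  have hdiff : Differentiable ℝ H := hH.differentiable (by simp)
  have hJt : J.transpose = -J := by
    subst hJ
    simp [Matrix.fromBlocks_transpose, Matrix.fromBlocks_neg]
  -- energy conservation along the flow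
  have hcons : ∀ w, H (Φ t w) = H w := by
    intro w
    have hc : ∀ s, HasDerivAt (fun s => H (Φ s w)) 0 s := by
      intro s
      have h1 := (hdiff (Φ s w)).hasFDerivAt.comp_hasDerivAt s (hΦ s w)
      convert h1 using 1
      case e'_4 => rfl
      case e'_5 => rfl
      case e'_8 => rfl
      rw [← aux_inner_gradient H (Φ s w), aux_inner_dot]
      have hofE : ofE (toE (J.mulVec (ofE (gradient H (Φ s w)))))
          = J.mulVec (ofE (gradient H (Φ s w))) := rfl
      rw [hofE, aux_antisym J hJt]
    have hD : Differentiable ℝ (fun s => H (Φ s w)) := fun s => (hc s).differentiableAt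
    have hconst := is_const_of_deriv_eq_zero hD (fun s => (hc s).deriv) t 0
    simpa [hΦ0] using hconst
  have hHΦ : H ∘ Φ t = H := funext hcons
  -- the linear map given by M
  set L : EuclideanSpace ℝ (Fin d ⊕ Fin d) →L[ℝ] EuclideanSpace ℝ (Fin d ⊕ Fin d) :=
    LinearMap.toContinuousLinearMap (Matrix.toEuclideanLin M) with hLdef
  have hL : ∀ v, L v = toE (M.mulVec (ofE v)) := fun v => by
    simp [hLdef, Matrix.toEuclideanLin_apply, toE, ofE]
  have hHL : H ∘ L = H := funext fun w => by rw [Function.comp_apply, hL]; exact hinv w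
  -- chain rule along the flow derivative
  have hB : fderiv ℝ H z = (fderiv ℝ H (Φ t z)).comp (F t z) := by
    have hcomp := ((hdiff (Φ t z)).hasFDerivAt.comp z (hF t z))
    rw [hHΦ] at hcomp
    exact hcomp.fderiv
  -- chain rule along M
  have hC : fderiv ℝ H (Φ t z) = (fderiv ℝ H z).comp L := by
    have hcomp := ((hdiff (L (Φ t z))).hasFDerivAt.comp (Φ t z) L.hasFDerivAt)
    have hLz : L (Φ t z) = z := by rw [hL]; exact hfix
    rw [hLz] at hcomp
    rw [hHL] at hcomp
    exact hcomp.fderiv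
  -- M^T ∇H(z) = ∇H(Φ t z)
  have key1 : toE (M.transpose.mulVec (ofE (gradient H z))) = gradient H (Φ t z) := by
    apply ext_inner_right ℝ
    intro v
    calc ⟪toE (M.transpose.mulVec (ofE (gradient H z))), v⟫
        = dotProduct (M.transpose.mulVec (ofE (gradient H z))) (ofE v) :=
          aux_inner_dot _ _
      _ = dotProduct (ofE (gradient H z)) (M.mulVec (ofE v)) := by
          rw [Matrix.mulVec_transpose, ← Matrix.dotProduct_mulVec]
      _ = ⟪gradient H z, L v⟫ := by
          rw [aux_inner_dot (gradient H z) (L v), hL]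
          rfl
      _ = fderiv ℝ H z (L v) := aux_inner_gradient H z (L v)
      _ = fderiv ℝ H (Φ t z) v := by rw [hC]; rfl
      _ = ⟪gradient H (Φ t z), v⟫ := (aux_inner_gradient H (Φ t z) v).symm
  rw [key1]
  -- adjoint (F t z) ∇H(Φ t z) = ∇H(z)
  apply ext_inner_right ℝ
  intro v
  rw [ContinuousLinearMap.adjoint_inner_left, aux_inner_gradient, aux_inner_gradient, hB]
  rfl
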